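/- arXiv:1011.0447 — 4 statements merged into one kernel-verified Lean document; each statement's English description precedes it below -/
import Mathlib

section
/- Let P = (Q,T) be a parameterized system with initial local state q₀ ∈ Q, and let Φ_P be its first-order encoding. If a configuration c ∈ Q* is reachable in P from some initial configuration, i.e. q₀^n →*_P c for some n, then R(t_c) is a semantic consequence of Φ_P, i.e. R(t_c) holds in every first-order structure satisfying all formulas of Φ_P. -/
/-- Guards of conditional transition rules: `∀_I J` or `∃_I J` with `I ∈ {L, R, LR}`. -/
inductive Guard (Q : Type) : Type
  | forallL (J : Set Q)
  | forallR (J : Set Q)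
  | forallLR (J : Set Q)
  | existsL (J : Set Q)
  | existsR (J : Set Q)
  | existsLR (J : Set Q)

/-- A transition rule of a parameterized system: an optional guard, a source
local state and a target local state. -/
structure Rule (Q : Type) : Type where
  guard : Option (Guard Q)
  src : Q
  tgt : Q

/-- Satisfaction of a guard at a position whose strict left context is `u` and
strict right context is `v`. -/
def GuardSat {Q : Type} (g : Guard Q) (u v : List Q) : Prop :=
  match g with
  | .forallL J => ∀ q ∈ u, q ∈ J
  | .forallR J => ∀ q ∈ v, q ∈ J
  | .forallLR J => (∀ q ∈ u, q ∈ J) ∧ (∀ q ∈ v, q ∈ J)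
  | .existsL J => ∃ q ∈ u, q ∈ J
  | .existsR J => ∃ q ∈ v, q ∈ J
  | .existsLR J => (∃ q ∈ u, q ∈ J) ∨ (∃ q ∈ v, q ∈ J)

/-- One-step transition relation `→_P` of the parameterized system with rules `T`. -/
def Step {Q : Type} (T : Set (Rule Q)) (c c' : List Q) : Prop :=
  ∃ r ∈ T, ∃ u v : List Q,
    c = u ++ r.src :: v ∧ c' = u ++ r.tgt :: v ∧
      ∀ g, r.guard = some g → GuardSat g u v

/-- Reachability `→*_P`: the reflexive-transitive closure of `→_P`. -/
def Reach {Q : Type} (T : Set (Rule Q)) : List Q → List Q → Prop :=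
  Relation.ReflTransGen (Step T)

/-- Interpretation `[t_c]` of the closed term `t_c = c₁ * ⋯ * cₙ` (with `t_ε = e`)
in a structure with domain `M`, binary operation `mul`, constants `e` and `cq q`. -/
def wordVal {Q M : Type} (mul : M → M → M) (e : M) (cq : Q → M) : List Q → M
  | [] => e
  | [q] => cq q
  | q :: q' :: rest => mul (cq q) (wordVal mul e cq (q' :: rest))

/-- The set `J` of a universal guard (if any). -/
def univGuardSet {Q : Type} (g : Guard Q) : Option (Set Q) :=
  match g with
  | .forallL J => some J
  | .forallR J => some J
  | .forallLR J => some J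
  | _ => none

/-- The (universal closure of the) axiom of `Φ_P` corresponding to a single
transition rule, interpreted in a first-order structure with domain `M`. -/
def RuleAx {Q M : Type} (mul : M → M → M) (cq : Q → M)
    (R : M → Prop) (PJ : Set Q → M → Prop) (r : Rule Q) : Prop :=
  match r.guard with
  | none =>
      ∀ x y, R (mul (mul x (cq r.src)) y) → R (mul (mul x (cq r.tgt)) y)
  | some (.forallL J) =>
      ∀ x y, R (mul (mul x (cq r.src)) y) ∧ PJ J x → R (mul (mul x (cq r.tgt)) y)
  | some (.forallR J) =>
      ∀ x y, R (mul (mul x (cq r.src)) y) ∧ PJ J y → R (mul (mul x (cq r.tgt)) y)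
  | some (.forallLR J) =>
      ∀ x y, R (mul (mul x (cq r.src)) y) ∧ PJ J x ∧ PJ J y →
        R (mul (mul x (cq r.tgt)) y)
  | some (.existsL J) =>
      ∀ q ∈ J, ∀ x y z w,
        R (mul (mul x (cq r.src)) y) ∧ x = mul (mul z (cq q)) w →
          R (mul (mul x (cq r.tgt)) y)
  | some (.existsR J) =>
      ∀ q ∈ J, ∀ x y z w,
        R (mul (mul x (cq r.src)) y) ∧ y = mul (mul z (cq q)) w →
          R (mul (mul x (cq r.tgt)) y)
  | some (.existsLR J) =>
      ∀ q ∈ J, ∀ x y z w,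
        R (mul (mul x (cq r.src)) y) ∧
            (x = mul (mul z (cq q)) w ∨ y = mul (mul z (cq q)) w) →
          R (mul (mul x (cq r.tgt)) y)

/-- A first-order structure (domain `M`, operation `mul`, constants `e`, `cq q`,
predicates `In`, `R`, `P^J`) satisfies all formulas of the encoding `Φ_P` of the
parameterized system with rules `T` and initial local state `q0`. -/
def SatPhi {Q M : Type} (T : Set (Rule Q)) (q0 : Q)
    (mul : M → M → M) (e : M) (cq : Q → M)
    (In R : M → Prop) (PJ : Set Q → M → Prop) : Prop :=
  (∀ x y z : M, mul (mul x y) z = mul x (mul y z)) ∧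
  (∀ x : M, mul e x = x) ∧
  (∀ x : M, mul x e = x) ∧
  In e ∧
  (∀ x, In x → In (mul x (cq q0))) ∧
  (∀ x, In x → R x) ∧
  (∀ J : Set Q, (∃ r ∈ T, ∃ g, r.guard = some g ∧ univGuardSet g = some J) →
      PJ J e ∧ ∀ q ∈ J, ∀ x, PJ J x → PJ J (mul x (cq q))) ∧
  (∀ r ∈ T, RuleAx mul cq R PJ r)

/-- adequacy of the encoding: for a parameterized system
`P = (Q, T)` with initial local state `q0`, if a configuration `c` is reachable
from an initial configuration `q0^n`, then `R(t_c)` holds in every first-order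
structure satisfying all formulas of `Φ_P`. -/
theorem adequacy_of_encoding {Q : Type} [Finite Q]
    (T : Set (Rule Q)) (hT : T.Finite) (q0 : Q)
    (n : ℕ) (c : List Q) (hreach : Reach T (List.replicate n q0) c)
    (M : Type) (mul : M → M → M) (e : M) (cq : Q → M)
    (In R : M → Prop) (PJ : Set Q → M → Prop)
    (hPhi : SatPhi T q0 mul e cq In R PJ) :
    R (wordVal mul e cq c) := by
  obtain ⟨hassoc, hel, her, hIne, hInq, hInR, hPJax, hrule⟩ := hPhi
  have hcons : ∀ (q : Q) (l : List Q),
      wordVal mul e cq (q :: l) = mul (cq q) (wordVal mul e cq l) := by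
    intro q l
    cases l with
    | nil => simp [wordVal, her]
    | cons a t => rfl
  have happ : ∀ (a b : List Q),
      wordVal mul e cq (a ++ b) = mul (wordVal mul e cq a) (wordVal mul e cq b) := by
    intro a b
    induction a with
    | nil => simp [wordVal, hel]
    | cons q t ih => simp [hcons, ih, hassoc]
  have hbase : ∀ m, In (wordVal mul e cq (List.replicate m q0)) := by
    intro m
    induction m with
    | zero => simpa [wordVal] using hIne
    | succ k ih =>
      rw [List.replicate_succ', happ]
      have : wordVal mul e cq [q0] = cq q0 := rfl
      rw [this]
      exact hInq _ ih
  have hdecomp : ∀ (u v : List Q) (q : Q),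
      wordVal mul e cq (u ++ q :: v)
        = mul (mul (wordVal mul e cq u) (cq q)) (wordVal mul e cq v) := by
    intro u v q
    rw [happ, hcons, ← hassoc]
  have hPall : ∀ (J : Set Q), PJ J e →
      (∀ q ∈ J, ∀ x, PJ J x → PJ J (mul x (cq q))) →
      ∀ l : List Q, (∀ q ∈ l, q ∈ J) → PJ J (wordVal mul e cq l) := by
    intro J h1 h2 l
    induction l using List.reverseRecOn with
    | nil => intro _; exact h1
    | append_singleton l a ih =>
      intro hl
      rw [happ]
      have hv : wordVal mul e cq [a] = cq a := rfl
      rw [hv]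
      exact h2 a (hl a (by simp)) _ (ih (fun q hq => hl q (by simp [hq])))
  have hstep : ∀ c c', Step T c c' →
      R (wordVal mul e cq c) → R (wordVal mul e cq c') := by
    rintro c c' ⟨r, hrT, u, v, hc, hc', hg⟩ hR
    subst hc; subst hc'
    rw [hdecomp] at hR ⊢
    have hax := hrule r hrT
    obtain ⟨og, src, tgt⟩ := r
    cases og with
    | none => exact hax _ _ hR
    | some g =>
      have hgs : GuardSat g u v := hg g rfl
      cases g with
      | forallL J =>
        have hJ := hPJax J ⟨⟨some (.forallL J), src, tgt⟩, hrT, _, rfl, rfl⟩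
        exact hax _ _ ⟨hR, hPall J hJ.1 hJ.2 _ hgs⟩
      | forallR J =>
        have hJ := hPJax J ⟨⟨some (.forallR J), src, tgt⟩, hrT, _, rfl, rfl⟩
        exact hax _ _ ⟨hR, hPall J hJ.1 hJ.2 _ hgs⟩
      | forallLR J =>
        have hJ := hPJax J ⟨⟨some (.forallLR J), src, tgt⟩, hrT, _, rfl, rfl⟩
        obtain ⟨hgl, hgr⟩ := hgs
        exact hax _ _ ⟨hR, hPall J hJ.1 hJ.2 _ hgl, hPall J hJ.1 hJ.2 _ hgr⟩
      | existsL J =>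
        obtain ⟨q, hqu, hqJ⟩ := hgs
        obtain ⟨s, t, hst⟩ := List.append_of_mem hqu
        refine hax q hqJ _ _ (wordVal mul e cq s) (wordVal mul e cq t)
          ⟨hR, ?_⟩
        rw [hst, hdecomp]
      | existsR J =>
        obtain ⟨q, hqv, hqJ⟩ := hgs
        obtain ⟨s, t, hst⟩ := List.append_of_mem hqv
        refine hax q hqJ _ _ (wordVal mul e cq s) (wordVal mul e cq t)
          ⟨hR, ?_⟩
        rw [hst, hdecomp]
      | existsLR J =>
        cases hgs with
        | inl h =>
          obtain ⟨q, hqu, hqJ⟩ := h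
          obtain ⟨s, t, hst⟩ := List.append_of_mem hqu
          refine hax q hqJ _ _ (wordVal mul e cq s) (wordVal mul e cq t)
            ⟨hR, Or.inl ?_⟩
          rw [hst, hdecomp]
        | inr h =>
          obtain ⟨q, hqv, hqJ⟩ := h
          obtain ⟨s, t, hst⟩ := List.append_of_mem hqv
          refine hax q hqJ _ _ (wordVal mul e cq s) (wordVal mul e cq t)
            ⟨hR, Or.inr ?_⟩
          rw [hst, hdecomp]
  induction hreach with
  | refl => exact hInR _ (hbase n)
  | tail _ h ih => exact hstep _ _ h ih
end

section
/- Let P = (Q,T) be a parameterized system with initial local state q₀, let F ⊆ Q* be a finite set of generators with B = {c ∈ Q* : ∃w ∈ F, w ⪯ c} the set of bad configurations, and let Φ_P and Ψ_F be the first-order encodings. If Ψ_F is not a semantic consequence of Φ_P (i.e. some first-order structure satisfies Φ_P and ¬Ψ_F), then no bad configuration is reachable from any initial configuration: for all n and all c ∈ B, it is not the case that q₀^n →*_P c. -/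
/-- Value of the term `x₀ * w₁ * x₁ * ⋯ * wₙ * xₙ` under an assignment: `x0` is
the value of `x₀` and `xs` the values of `x₁, …, xₙ`. -/
def psiVal {Q M : Type} (mul : M → M → M) (cq : Q → M) :
    M → List Q → List M → M
  | x, [], _ => x
  | x, _ :: _, [] => x
  | x, q :: ws, y :: ys => psiVal mul cq (mul (mul x (cq q)) y) ws ys

/-- The sentence `Ψ_F` (the existential closure of `⋁_{w ∈ F} ψ_w`, where
`ψ_w = R(x₀ * w₁ * x₁ * ⋯ * wₙ * xₙ)`) holds in the given structure. -/
def SatPsiF {Q M : Type} (mul : M → M → M) (cq : Q → M) (R : M → Prop)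
    (F : Set (List Q)) : Prop :=
  ∃ w ∈ F, ∃ x0 : M, ∃ xs : List M, xs.length = w.length ∧
    R (psiVal mul cq x0 w xs)

/-!
A model of `Φ_P` is a monoid (associativity and the unit laws) in which `R` holds at the
value `c₁ ⋯ cₙ` of every reachable configuration `c`: `In` marks the values of the initial
configurations, the axiom of each rule closes `R` under its transition, and `P^J` holds at the
value of every word over `J`, which is what makes the universal guards sound. A bad
configuration `c` containing `w` as a subword has a value of the form
`x₀ w₁ x₁ ⋯ wₙ xₙ`, so if it were reachable, `Ψ_F` would hold in the model.
-/

section Monoid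

variable {Q M : Type} [Monoid M] (cq : Q → M)

theorem psiVal_mul_left (m : M) (w : List Q) (x : M) (ys : List M) :
    psiVal (· * ·) cq (m * x) w ys = m * psiVal (· * ·) cq x w ys := by
  induction w generalizing x ys with
  | nil => rfl
  | cons q ws ih =>
    cases ys with
    | nil => rfl
    | cons y ys => simp only [psiVal, mul_assoc, ← ih]

theorem exists_psiVal_eq_prod_of_sublist {w c : List Q} (h : w.Sublist c) :
    ∃ (x₀ : M) (xs : List M), xs.length = w.length ∧
      (c.map cq).prod = psiVal (· * ·) cq x₀ w xs := by
  induction h with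
  | slnil => exact ⟨1, [], rfl, rfl⟩
  | cons a _ ih =>
    obtain ⟨x₀, xs, hlen, hval⟩ := ih
    exact ⟨cq a * x₀, xs, hlen, by rw [List.map_cons, List.prod_cons, hval, psiVal_mul_left]⟩
  | cons_cons a _ ih =>
    obtain ⟨x₀, xs, hlen, hval⟩ := ih
    refine ⟨1, x₀ :: xs, by simp [hlen], ?_⟩
    simp only [List.map_cons, List.prod_cons, hval, psiVal, one_mul, psiVal_mul_left]

theorem prod_map_mem_of_forall_mem {P : M → Prop} {J : Set Q} (h₁ : P 1)
    (hmul : ∀ q ∈ J, ∀ x, P x → P (x * cq q)) {u : List Q} (hu : ∀ q ∈ u, q ∈ J) :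
    P (u.map cq).prod := by
  induction u using List.reverseRecOn with
  | nil => exact h₁
  | append_singleton t q ih =>
    simp only [List.mem_append, List.mem_singleton] at hu
    rw [List.map_append, List.prod_append, List.map_singleton, List.prod_singleton]
    exact hmul q (hu q (.inr rfl)) _ (ih fun p hp => hu p (.inl hp))

theorem exists_prod_map_eq_of_mem {q : Q} {u : List Q} (h : q ∈ u) :
    ∃ z w : M, (u.map cq).prod = z * cq q * w := by
  obtain ⟨s, t, rfl⟩ := List.append_of_mem h
  exact ⟨(s.map cq).prod, (t.map cq).prod, by simp [mul_assoc]⟩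

variable {R : M → Prop} {PJ : Set Q → M → Prop}

theorem RuleAx.apply {r : Rule Q} (hax : RuleAx (· * ·) cq R PJ r) {u v : List Q}
    (hP : ∀ g J, r.guard = some g → univGuardSet g = some J →
      ∀ l : List Q, (∀ q ∈ l, q ∈ J) → PJ J (l.map cq).prod)
    (hg : ∀ g, r.guard = some g → GuardSat g u v)
    (hR : R ((u.map cq).prod * cq r.src * (v.map cq).prod)) :
    R ((u.map cq).prod * cq r.tgt * (v.map cq).prod) := by
  unfold RuleAx at hax
  rcases hguard : r.guard with _ | (J | J | J | J | J | J) <;> simp only [hguard] at hax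
  · exact hax _ _ hR
  · exact hax _ _ ⟨hR, hP _ J hguard rfl u (hg _ hguard)⟩
  · exact hax _ _ ⟨hR, hP _ J hguard rfl v (hg _ hguard)⟩
  · obtain ⟨hu, hv⟩ := hg _ hguard
    exact hax _ _ ⟨hR, hP _ J hguard rfl u hu, hP _ J hguard rfl v hv⟩
  · obtain ⟨q, hq, hqJ⟩ := hg _ hguard
    obtain ⟨z, w, hz⟩ := exists_prod_map_eq_of_mem cq hq
    exact hax q hqJ _ _ z w ⟨hR, hz⟩
  · obtain ⟨q, hq, hqJ⟩ := hg _ hguard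
    obtain ⟨z, w, hz⟩ := exists_prod_map_eq_of_mem cq hq
    exact hax q hqJ _ _ z w ⟨hR, hz⟩
  · rcases hg _ hguard with ⟨q, hq, hqJ⟩ | ⟨q, hq, hqJ⟩
    · obtain ⟨z, w, hz⟩ := exists_prod_map_eq_of_mem cq hq
      exact hax q hqJ _ _ z w ⟨hR, .inl hz⟩
    · obtain ⟨z, w, hz⟩ := exists_prod_map_eq_of_mem cq hq
      exact hax q hqJ _ _ z w ⟨hR, .inr hz⟩

variable {T : Set (Rule Q)} {q0 : Q} {In : M → Prop}

theorem SatPhi.R_prod_of_step (hΦ : SatPhi T q0 (· * ·) 1 cq In R PJ) {a b : List Q}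
    (hab : Step T a b) (ha : R (a.map cq).prod) : R (b.map cq).prod := by
  obtain ⟨-, -, -, -, -, -, hPJ, hrules⟩ := hΦ
  obtain ⟨r, hr, u, v, rfl, rfl, hg⟩ := hab
  have hP : ∀ g J, r.guard = some g → univGuardSet g = some J →
      ∀ l : List Q, (∀ q ∈ l, q ∈ J) → PJ J (l.map cq).prod := fun g J hrg hgJ _ hl =>
    have ⟨h₁, hmul⟩ := hPJ J ⟨r, hr, g, hrg, hgJ⟩
    prod_map_mem_of_forall_mem cq h₁ hmul hl
  simp only [List.map_append, List.map_cons, List.prod_append, List.prod_cons, ← mul_assoc]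
    at ha ⊢
  exact (hrules r hr).apply cq hP hg ha

theorem SatPhi.R_prod_replicate (hΦ : SatPhi T q0 (· * ·) 1 cq In R PJ) (n : ℕ) :
    R ((List.replicate n q0).map cq).prod := by
  obtain ⟨-, -, -, hIn₁, hInmul, hInR, -⟩ := hΦ
  refine hInR _ ?_
  induction n with
  | zero => exact hIn₁
  | succ n ih =>
    rw [List.replicate_succ', List.map_append, List.prod_append, List.map_singleton,
      List.prod_singleton]
    exact hInmul _ ih

theorem SatPhi.R_prod_of_reach (hΦ : SatPhi T q0 (· * ·) 1 cq In R PJ) {n : ℕ} {c : List Q}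
    (hc : Reach T (List.replicate n q0) c) : R (c.map cq).prod := by
  induction hc with
  | refl => exact hΦ.R_prod_replicate cq n
  | tail _ hab ih => exact hΦ.R_prod_of_step cq hab ih

end Monoid

theorem correctness_of_method_general {Q : Type}
    (T : Set (Rule Q)) (q0 : Q)
    (F : Set (List Q))
    (hmodel : ∃ (M : Type) (mul : M → M → M) (e : M) (cq : Q → M)
      (In R : M → Prop) (PJ : Set Q → M → Prop),
        SatPhi T q0 mul e cq In R PJ ∧ ¬ SatPsiF mul cq R F) :
    ∀ (n : ℕ) (c : List Q), (∃ w ∈ F, w.Sublist c) →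
      ¬ Reach T (List.replicate n q0) c := by
  rintro n c ⟨w, hwF, hwc⟩ hreach
  obtain ⟨M, mul, e, cq, In, R, PJ, hΦ, hΨ⟩ := hmodel
  let _ : Monoid M :=
    { mul, one := e, mul_assoc := hΦ.1, one_mul := hΦ.2.1, mul_one := hΦ.2.2.1 }
  obtain ⟨x₀, xs, hlen, hval⟩ := exists_psiVal_eq_prod_of_sublist cq hwc
  exact hΨ ⟨w, hwF, x₀, xs, hlen, hval ▸ hΦ.R_prod_of_reach cq hreach⟩

/-- correctness of the method: if some first-order structure
satisfies `Φ_P` together with `¬Ψ_F`, then no bad configuration (a configuration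
containing some `w ∈ F` as a subword) is reachable from any initial
configuration `q0^n`. -/
theorem correctness_of_method {Q : Type} [Finite Q]
    (T : Set (Rule Q)) (hT : T.Finite) (q0 : Q)
    (F : Set (List Q)) (hF : F.Finite)
    (hmodel : ∃ (M : Type) (mul : M → M → M) (e : M) (cq : Q → M)
      (In R : M → Prop) (PJ : Set Q → M → Prop),
        SatPhi T q0 mul e cq In R PJ ∧ ¬ SatPsiF mul cq R F) :
    ∀ (n : ℕ) (c : List Q), (∃ w ∈ F, w.Sublist c) →
      ¬ Reach T (List.replicate n q0) c :=
  correctness_of_method_general T q0 F hmodel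
end

section
/- Let P = (Q,T) be a parameterized system with initial local state q₀, F ⊆ Q* a finite set of generators, B = {c ∈ Q* : ∃w ∈ F, w ⪯ c} the set of bad configurations, and define U₀ = B and U_{i+1} = U_i ∪ Pre(U_i) where Pre(U) = {c : ∃c' ∈ U, c →^A_P c'}. Suppose for some n, U_{n+1} = U_n and U_n ∩ Init = ∅, where Init = q₀*. Then there exists a FINITE first-order structure (a structure with finite domain) satisfying all formulas of Φ_P together with ¬Ψ_F. -/
/-- The monotonic abstraction `→^A_P` of `→_P`:
`c →^A_P c'` iff some subword of `c` makes a `→_P` step to `c'`. -/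
def AStep {Q : Type} (T : Set (Rule Q)) (c c' : List Q) : Prop :=
  ∃ c₁ : List Q, c₁.Sublist c ∧ Step T c₁ c'

/-- `Pre(U)`: configurations from which some configuration of `U` is reachable
in one `→^A_P` step. -/
def Pre {Q : Type} (T : Set (Rule Q)) (U : Set (List Q)) : Set (List Q) :=
  {c | ∃ c' ∈ U, AStep T c c'}

/-- The backward reachability sequence: `U 0 = B`, `U (i+1) = U i ∪ Pre (U i)`. -/
def Useq {Q : Type} (T : Set (Rule Q)) (B : Set (List Q)) : ℕ → Set (List Q)
  | 0 => B
  | i + 1 => Useq T B i ∪ Pre T (Useq T B i)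

/-!
Let `U = U_n`. It is closed under superwords and under `Pre`, and every word of `U` has a
subword in `U` of length at most `N = max {|w| : w ∈ F} + 3n`: replaying a step backwards from
a short word costs the source letter plus at most one witness letter on each side of the guard.

The model consists of the nonempty subword-closed sets of words of length at most `N`,
multiplied by concatenation truncated at length `N`; the constant `q` is `{ε, q}`, `R` holds of
the sets disjoint from `U`, `P^J` of the sets all of whose letters lie in `J`, and `In` of the
truncations of `q₀^k`. If a rule axiom failed, some word of `x * q₂ * y` would lie in `U`. Its
left and right pieces can be enlarged to words satisfying the guard whose short subwords stay in
`x` and `y` (for existential guards this uses the equation `x = z * q * w`); then closure under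
`Pre` puts the word with `q₁` in `U`, and its short witness lies in `x * q₁ * y`. Finally, `Ψ_F`
fails since the value of `ψ_w` contains `w ∈ B ⊆ U`.
-/

open List

variable {Q : Type}

theorem List.Sublist.exists_sublist_mem_of_mem {s u : List Q} {q : Q} (hs : s <+ u)
    (hq : q ∈ u) :
    ∃ s', s <+ s' ∧ s' <+ u ∧ q ∈ s' ∧ s'.length ≤ s.length + 1 := by
  obtain ⟨u₁, u₂, rfl⟩ := append_of_mem hq
  obtain ⟨s₁, s₂, rfl, hs₁, hs₂⟩ := sublist_append_iff.1 hs
  rcases sublist_cons_iff.1 hs₂ with hs₂ | ⟨t, rfl, ht⟩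
  · exact ⟨s₁ ++ q :: s₂, (Sublist.refl s₁).append (sublist_cons_self q s₂),
      hs₁.append (cons_sublist_cons.2 hs₂), by simp, by simp; omega⟩
  · exact ⟨s₁ ++ q :: t, .refl _, hs, by simp, by simp⟩

theorem exists_short_context {og : Option (Guard Q)} {u v mu mv : List Q}
    (hg : ∀ g, og = some g → GuardSat g u v) (hu : mu <+ u) (hv : mv <+ v) :
    ∃ mu' mv', mu <+ mu' ∧ mu' <+ u ∧ mv <+ mv' ∧ mv' <+ v ∧
      mu'.length ≤ mu.length + 1 ∧ mv'.length ≤ mv.length + 1 ∧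
      ∀ g, og = some g → GuardSat g mu' mv' := by
  have hlen : mu.length ≤ mu.length + 1 ∧ mv.length ≤ mv.length + 1 := by omega
  rcases og with _ | g
  · exact ⟨mu, mv, .refl _, hu, .refl _, hv, hlen.1, hlen.2, nofun⟩
  simp only [Option.some.injEq, forall_eq'] at hg ⊢
  cases g with
  | forallL J => exact ⟨mu, mv, .refl _, hu, .refl _, hv, hlen.1, hlen.2,
      fun q hq => hg q (hu.subset hq)⟩
  | forallR J => exact ⟨mu, mv, .refl _, hu, .refl _, hv, hlen.1, hlen.2,
      fun q hq => hg q (hv.subset hq)⟩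
  | forallLR J => exact ⟨mu, mv, .refl _, hu, .refl _, hv, hlen.1, hlen.2,
      fun q hq => hg.1 q (hu.subset hq), fun q hq => hg.2 q (hv.subset hq)⟩
  | existsL J =>
    obtain ⟨q, hq, hqJ⟩ := hg
    obtain ⟨mu', h₁, h₂, h₃, h₄⟩ := hu.exists_sublist_mem_of_mem hq
    exact ⟨mu', mv, h₁, h₂, .refl _, hv, h₄, hlen.2, q, h₃, hqJ⟩
  | existsR J =>
    obtain ⟨q, hq, hqJ⟩ := hg
    obtain ⟨mv', h₁, h₂, h₃, h₄⟩ := hv.exists_sublist_mem_of_mem hq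
    exact ⟨mu, mv', .refl _, hu, h₁, h₂, hlen.1, h₄, q, h₃, hqJ⟩
  | existsLR J =>
    rcases hg with ⟨q, hq, hqJ⟩ | ⟨q, hq, hqJ⟩
    · obtain ⟨mu', h₁, h₂, h₃, h₄⟩ := hu.exists_sublist_mem_of_mem hq
      exact ⟨mu', mv, h₁, h₂, .refl _, hv, h₄, hlen.2, .inl ⟨q, h₃, hqJ⟩⟩
    · obtain ⟨mv', h₁, h₂, h₃, h₄⟩ := hv.exists_sublist_mem_of_mem hq
      exact ⟨mu, mv', .refl _, hu, h₁, h₂, hlen.1, h₄, .inr ⟨q, h₃, hqJ⟩⟩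

theorem Step.exists_short {T : Set (Rule Q)} {c c' m : List Q} (h : Step T c c')
    (hm : m <+ c') :
    ∃ m₁ m', m₁ <+ c ∧ m <+ m' ∧ Step T m₁ m' ∧ m₁.length ≤ m.length + 3 := by
  obtain ⟨r, hr, u, v, rfl, rfl, hg⟩ := h
  obtain ⟨mu, rest, rfl, hmu, hrest⟩ := sublist_append_iff.1 hm
  obtain ⟨mt, mv, rfl, hmt, hmv⟩ := (sublist_append_iff (r₁ := [r.tgt])).1 hrest
  obtain ⟨mu', mv', hmu₁, hmu₂, hmv₁, hmv₂, hlu, hlv, hg'⟩ :=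
    exists_short_context hg hmu hmv
  refine ⟨mu' ++ r.src :: mv', mu' ++ r.tgt :: mv', hmu₂.append (hmv₂.cons_cons _),
    hmu₁.append (hmt.append hmv₁), ⟨r, hr, mu', mv', rfl, rfl, hg'⟩, ?_⟩
  simp only [length_append, length_cons]
  omega

section Useq

variable {T : Set (Rule Q)} {B : Set (List Q)}

theorem Useq.mono (T : Set (Rule Q)) (B : Set (List Q)) {i j : ℕ} (h : i ≤ j) :
    Useq T B i ⊆ Useq T B j := by
  induction h with
  | refl => exact subset_rfl
  | step _ ih => exact ih.trans Set.subset_union_left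

theorem Useq.mem_of_sublist (hB : ∀ {c d}, c ∈ B → c <+ d → d ∈ B) :
    ∀ i {c d : List Q}, c ∈ Useq T B i → c <+ d → d ∈ Useq T B i
  | 0, _, _, hc, hcd => hB hc hcd
  | _ + 1, _, _, .inl hc, hcd => .inl (Useq.mem_of_sublist hB _ hc hcd)
  | _ + 1, _, _, .inr ⟨c', hc', c₁, hsub, hstep⟩, hcd =>
    .inr ⟨c', hc', c₁, hsub.trans hcd, hstep⟩

theorem Useq.exists_short_sublist {L : ℕ} (hB : ∀ {c d}, c ∈ B → c <+ d → d ∈ B)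
    (hBshort : ∀ c ∈ B, ∃ m, m <+ c ∧ m ∈ B ∧ m.length ≤ L) :
    ∀ i, ∀ c ∈ Useq T B i, ∃ m, m <+ c ∧ m ∈ Useq T B i ∧ m.length ≤ L + 3 * i
  | 0, c, hc => hBshort c hc
  | i + 1, c, .inl hc => by
    obtain ⟨m, hmc, hm, hlen⟩ := Useq.exists_short_sublist hB hBshort i c hc
    exact ⟨m, hmc, .inl hm, by omega⟩
  | i + 1, c, .inr ⟨c', hc', c₁, hc₁, hstep⟩ => by
    obtain ⟨m, hmc, hm, hlen⟩ := Useq.exists_short_sublist hB hBshort i c' hc'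
    obtain ⟨m₁, m', hm₁, hmm', hstep', hlen'⟩ := hstep.exists_short hmc
    exact ⟨m₁, hm₁.trans hc₁,
      .inr ⟨m', Useq.mem_of_sublist hB i hm hmm', m₁, .refl _, hstep'⟩, by omega⟩

end Useq

structure ShortLowerSet (Q : Type) (N : ℕ) where
  carrier : Set (List Q)
  nil_mem : [] ∈ carrier
  length_le : ∀ w ∈ carrier, w.length ≤ N
  mem_of_sublist : ∀ {v w}, w ∈ carrier → v <+ w → v ∈ carrier

namespace ShortLowerSet

variable {N : ℕ}

instance : SetLike (ShortLowerSet Q N) (List Q) where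
  coe := carrier
  coe_injective A B h := by cases A; cases B; congr

instance : PartialOrder (ShortLowerSet Q N) := .ofSetLike (ShortLowerSet Q N) (List Q)

@[ext]
theorem ext {A B : ShortLowerSet Q N} (h : ∀ w, w ∈ A ↔ w ∈ B) : A = B := SetLike.ext h

instance [Finite Q] : Finite (ShortLowerSet Q N) :=
  have := (List.finite_length_le Q N).finite_subsets.to_subtype
  Finite.of_injective (fun A => (⟨A, A.length_le⟩ : {t | t ⊆ {l : List Q | l.length ≤ N}}))
    fun _ _ h => SetLike.coe_injective (congrArg Subtype.val h)

def ofWord (N : ℕ) (u : List Q) : ShortLowerSet Q N where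
  carrier := {w | w.length ≤ N ∧ w <+ u}
  nil_mem := ⟨by simp, nil_sublist u⟩
  length_le _ hw := hw.1
  mem_of_sublist hw hv := ⟨hv.length_le.trans hw.1, hv.trans hw.2⟩

theorem mem_ofWord {u w : List Q} : w ∈ ofWord N u ↔ w.length ≤ N ∧ w <+ u := Iff.rfl

instance : Mul (ShortLowerSet Q N) where
  mul A B :=
    { carrier := {w | w.length ≤ N ∧ ∃ a ∈ A, ∃ b ∈ B, a ++ b = w}
      nil_mem := ⟨by simp, [], A.nil_mem, [], B.nil_mem, rfl⟩
      length_le _ hw := hw.1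
      mem_of_sublist := by
        rintro v _ ⟨hlen, a, ha, b, hb, rfl⟩ hv
        obtain ⟨a', b', rfl, ha', hb'⟩ := sublist_append_iff.1 hv
        exact ⟨hv.length_le.trans hlen, a', A.mem_of_sublist ha ha', b', B.mem_of_sublist hb hb',
          rfl⟩ }

theorem mem_mul {A B : ShortLowerSet Q N} {w : List Q} :
    w ∈ A * B ↔ w.length ≤ N ∧ ∃ a ∈ A, ∃ b ∈ B, a ++ b = w := Iff.rfl

instance : One (ShortLowerSet Q N) := ⟨ofWord N []⟩

theorem ofWord_nil : ofWord N ([] : List Q) = 1 := rfl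

theorem mem_one {w : List Q} : w ∈ (1 : ShortLowerSet Q N) ↔ w = [] := by
  rw [← ofWord_nil, mem_ofWord, sublist_nil, and_iff_right_iff_imp]
  rintro rfl
  exact Nat.zero_le N

instance : Monoid (ShortLowerSet Q N) where
  mul_assoc A B C := by
    ext w
    simp only [mem_mul]
    constructor
    · rintro ⟨hw, _, ⟨-, a, ha, b, hb, rfl⟩, c, hc, rfl⟩
      exact ⟨hw, a, ha, b ++ c, ⟨by simp at hw ⊢; omega, b, hb, c, hc, rfl⟩, by simp⟩
    · rintro ⟨hw, a, ha, _, ⟨-, b, hb, c, hc, rfl⟩, rfl⟩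
      exact ⟨hw, a ++ b, ⟨by simp at hw ⊢; omega, a, ha, b, hb, rfl⟩, c, hc, by simp⟩
  one_mul A := by
    ext w
    simp only [mem_mul, mem_one, exists_eq_left, nil_append, exists_eq_right, and_iff_right_iff_imp]
    exact A.length_le w
  mul_one A := by
    ext w
    simp only [mem_mul, mem_one, exists_eq_left, append_nil, exists_eq_right, and_iff_right_iff_imp]
    exact A.length_le w

theorem ofWord_append (u v : List Q) : ofWord N (u ++ v) = ofWord N u * ofWord N v := by
  ext w
  simp only [mem_mul, mem_ofWord]
  constructor
  · rintro ⟨hw, hsub⟩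
    obtain ⟨a, b, rfl, ha, hb⟩ := sublist_append_iff.1 hsub
    simp only [length_append] at hw
    exact ⟨by simpa using hw, a, ⟨by omega, ha⟩, b, ⟨by omega, hb⟩, rfl⟩
  · rintro ⟨hw, a, ⟨-, ha⟩, b, ⟨-, hb⟩, rfl⟩
    exact ⟨hw, ha.append hb⟩

instance : MulLeftMono (ShortLowerSet Q N) where
  elim _ _ _ h _ := fun ⟨hw, a, ha, b, hb, hab⟩ => ⟨hw, a, ha, b, h hb, hab⟩

instance : MulRightMono (ShortLowerSet Q N) where
  elim _ _ _ h _ := fun ⟨hw, a, ha, b, hb, hab⟩ => ⟨hw, a, h ha, b, hb, hab⟩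

theorem one_le (A : ShortLowerSet Q N) : 1 ≤ A := by
  intro w hw
  rw [mem_one.1 hw]
  exact A.nil_mem

theorem ofWord_le_of_mem {A : ShortLowerSet Q N} {u : List Q} (hu : u ∈ A) : ofWord N u ≤ A :=
  fun _ hw => A.mem_of_sublist hu hw.2

theorem exists_ofWord_le_of_mem_mul_ofWord_mul {z y : ShortLowerSet Q N} {q : Q} {a : List Q}
    (ha : a ∈ z * ofWord N [q] * y) :
    ∃ a', a <+ a' ∧ ofWord N a' ≤ z * ofWord N [q] * y ∧ q ∈ a' := by
  obtain ⟨-, _, ⟨-, p, hp, k, ⟨-, hk⟩, rfl⟩, s, hs, rfl⟩ := ha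
  refine ⟨p ++ [q] ++ s, (Sublist.refl p).append hk |>.append (.refl s), ?_, by simp⟩
  rw [ofWord_append, ofWord_append]
  exact mul_le_mul' (mul_le_mul' (ofWord_le_of_mem hp) le_rfl) (ofWord_le_of_mem hs)

def Avoids (U : Set (List Q)) (A : ShortLowerSet Q N) : Prop := ∀ w ∈ A, w ∉ U

def LettersIn (J : Set Q) (A : ShortLowerSet Q N) : Prop := ∀ w ∈ A, ∀ q ∈ w, q ∈ J

theorem lettersIn_one (J : Set Q) : LettersIn J (1 : ShortLowerSet Q N) := by
  intro w hw
  simp [mem_one.1 hw]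

theorem LettersIn.mul_ofWord {J : Set Q} {A : ShortLowerSet Q N} {q : Q} (hA : LettersIn J A)
    (hq : q ∈ J) : LettersIn J (A * ofWord N [q]) := by
  rintro _ ⟨-, a, ha, b, ⟨-, hb⟩, rfl⟩ q' hq'
  rcases mem_append.1 hq' with hq' | hq'
  · exact hA a ha q' hq'
  · rw [mem_singleton.1 (hb.subset hq')]
    exact hq

theorem Avoids.not_mem_of_ofWord_le {U : Set (List Q)}
    (hU : ∀ c ∈ U, ∃ m, m <+ c ∧ m ∈ U ∧ m.length ≤ N) {A : ShortLowerSet Q N}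
    (hA : Avoids U A) {c : List Q} (hc : ofWord N c ≤ A) : c ∉ U := fun hcU =>
  have ⟨m, hmc, hmU, hm⟩ := hU c hcU
  hA m (hc ⟨hm, hmc⟩) hmU

theorem avoids_mul_tgt_mul {T : Set (Rule Q)} {U : Set (List Q)}
    (hup : ∀ {c d}, c ∈ U → c <+ d → d ∈ U) (hpre : Pre T U ⊆ U)
    (hshort : ∀ c ∈ U, ∃ m, m <+ c ∧ m ∈ U ∧ m.length ≤ N) {r : Rule Q} (hr : r ∈ T)
    {x y : ShortLowerSet Q N} {p p' : List Q → Prop}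
    (hx : ∀ a ∈ x, ∃ a', a <+ a' ∧ ofWord N a' ≤ x ∧ p a')
    (hy : ∀ b ∈ y, ∃ b', b <+ b' ∧ ofWord N b' ≤ y ∧ p' b')
    (hg : ∀ a b, p a → p' b → ∀ g, r.guard = some g → GuardSat g a b)
    (h : Avoids U (x * ofWord N [r.src] * y)) : Avoids U (x * ofWord N [r.tgt] * y) := by
  rintro _ ⟨-, _, ⟨-, a, ha, m, ⟨-, hm⟩, rfl⟩, b, hb, rfl⟩ hw
  obtain ⟨a', haa', hxa', hpa'⟩ := hx a ha
  obtain ⟨b', hbb', hyb', hpb'⟩ := hy b hb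
  have htgt : a' ++ r.tgt :: b' ∈ U := hup hw (by simpa using haa'.append (hm.append hbb'))
  have hsrc : a' ++ r.src :: b' ∈ U :=
    hpre ⟨_, htgt, _, .refl _, r, hr, a', b', rfl, rfl, hg a' b' hpa' hpb'⟩
  refine h.not_mem_of_ofWord_le hshort ?_ hsrc
  calc ofWord N (a' ++ r.src :: b') = ofWord N a' * ofWord N [r.src] * ofWord N b' := by
        rw [← ofWord_append, ← ofWord_append, append_assoc, singleton_append]
    _ ≤ x * ofWord N [r.src] * y := mul_le_mul' (mul_le_mul' hxa' le_rfl) hyb'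

theorem ruleAx {T : Set (Rule Q)} {U : Set (List Q)}
    (hup : ∀ {c d}, c ∈ U → c <+ d → d ∈ U) (hpre : Pre T U ⊆ U)
    (hshort : ∀ c ∈ U, ∃ m, m <+ c ∧ m ∈ U ∧ m.length ≤ N) {r : Rule Q} (hr : r ∈ T) :
    RuleAx (· * ·) (fun q => ofWord N [q]) (Avoids U) LettersIn r := by
  have sound {x y : ShortLowerSet Q N} {p p' : List Q → Prop} :=
    avoids_mul_tgt_mul (x := x) (y := y) (p := p) (p' := p') hup hpre hshort hr
  have triv (x : ShortLowerSet Q N) : ∀ a ∈ x, ∃ a', a <+ a' ∧ ofWord N a' ≤ x ∧ True :=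
    fun a ha => ⟨a, .refl a, ofWord_le_of_mem ha, trivial⟩
  have self {x : ShortLowerSet Q N} {J : Set Q} (hx : LettersIn J x) :
      ∀ a ∈ x, ∃ a', a <+ a' ∧ ofWord N a' ≤ x ∧ ∀ q ∈ a', q ∈ J :=
    fun a ha => ⟨a, .refl a, ofWord_le_of_mem ha, hx a ha⟩
  obtain ⟨g, q₁, q₂⟩ := r
  rcases g with _ | ⟨J⟩ | ⟨J⟩ | ⟨J⟩ | ⟨J⟩ | ⟨J⟩ | ⟨J⟩
  · exact fun x y => sound (triv x) (triv y) (fun _ _ _ _ _ h => nomatch h)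
  · exact fun x y ⟨h, hx⟩ => sound (self hx) (triv y)
      (by rintro _ _ ha _ _ ⟨⟩; exact ha) h
  · exact fun x y ⟨h, hy⟩ => sound (triv x) (self hy)
      (by rintro _ _ _ hb _ ⟨⟩; exact hb) h
  · exact fun x y ⟨h, hx, hy⟩ => sound (self hx) (self hy)
      (by rintro _ _ ha hb _ ⟨⟩; exact ⟨ha, hb⟩) h
  · rintro q hq x y z w ⟨h, rfl⟩
    exact sound (fun _ => exists_ofWord_le_of_mem_mul_ofWord_mul) (triv y)
      (by rintro _ _ ha _ _ ⟨⟩; exact ⟨q, ha, hq⟩) h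
  · rintro q hq x y z w ⟨h, rfl⟩
    exact sound (triv x) (fun _ => exists_ofWord_le_of_mem_mul_ofWord_mul)
      (by rintro _ _ _ hb _ ⟨⟩; exact ⟨q, hb, hq⟩) h
  · rintro q hq x y z w ⟨h, rfl | rfl⟩
    · exact sound (fun _ => exists_ofWord_le_of_mem_mul_ofWord_mul) (triv y)
        (by rintro _ _ ha _ _ ⟨⟩; exact .inl ⟨q, ha, hq⟩) h
    · exact sound (triv x) (fun _ => exists_ofWord_le_of_mem_mul_ofWord_mul)
        (by rintro _ _ _ hb _ ⟨⟩; exact .inr ⟨q, hb, hq⟩) h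

theorem mul_ofWord_le_psiVal :
    ∀ (w : List Q) (x : ShortLowerSet Q N) (xs : List (ShortLowerSet Q N)),
      xs.length = w.length → x * ofWord N w ≤ psiVal (· * ·) (fun q => ofWord N [q]) x w xs
  | [], x, _, _ => (mul_one x).le
  | q :: w, x, y :: ys, hlen => calc
      x * ofWord N (q :: w) = x * ofWord N [q] * 1 * ofWord N w := by
        rw [mul_one, mul_assoc, ← ofWord_append, singleton_append]
      _ ≤ x * ofWord N [q] * y * ofWord N w :=
        mul_le_mul' (mul_le_mul' le_rfl (one_le y)) le_rfl
      _ ≤ _ := mul_ofWord_le_psiVal w _ ys (by simpa using hlen)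

end ShortLowerSet

open ShortLowerSet in
theorem relative_completeness_general {Q : Type} [Finite Q]
    (T : Set (Rule Q)) (q0 : Q)
    (F : Set (List Q)) (hF : F.Finite)
    (B : Set (List Q)) (hB : B = {c | ∃ w ∈ F, w.Sublist c})
    (n : ℕ) (hstab : Useq T B (n + 1) = Useq T B n)
    (hdisj : ∀ k : ℕ, List.replicate k q0 ∉ Useq T B n) :
    ∃ M : Type, Finite M ∧
      ∃ (mul : M → M → M) (e : M) (cq : Q → M)
        (In R : M → Prop) (PJ : Set Q → M → Prop),
        SatPhi T q0 mul e cq In R PJ ∧ ¬ SatPsiF mul cq R F := by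
  obtain ⟨L, hL⟩ := (hF.image length).bddAbove
  subst hB
  have hBup {c d : List Q} : (∃ w ∈ F, w <+ c) → c <+ d → ∃ w ∈ F, w <+ d :=
    fun ⟨w, hw, hwc⟩ hcd => ⟨w, hw, hwc.trans hcd⟩
  have hBshort (c : List Q) :
      (∃ w ∈ F, w <+ c) → ∃ m, m <+ c ∧ (∃ w ∈ F, w <+ m) ∧ m.length ≤ L :=
    fun ⟨w, hw, hwc⟩ => ⟨w, hwc, ⟨w, hw, .refl w⟩, hL (Set.mem_image_of_mem _ hw)⟩
  set U := Useq T {c | ∃ w ∈ F, w <+ c} n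
  have hpre : Pre T U ⊆ U := fun c hc => hstab ▸ Or.inr hc
  have hshort := Useq.exists_short_sublist (T := T) @hBup hBshort n
  refine ⟨ShortLowerSet Q (L + 3 * n), inferInstance, (· * ·), 1, fun q => ofWord _ [q],
    fun A => ∃ k, A = ofWord _ (replicate k q0), Avoids U, LettersIn,
    ⟨mul_assoc, one_mul, mul_one, ⟨0, rfl⟩, ?_, ?_, fun J _ => ⟨lettersIn_one J, ?_⟩,
      fun r hr => ruleAx (Useq.mem_of_sublist @hBup n) hpre hshort hr⟩, ?_⟩
  · rintro _ ⟨k, rfl⟩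
    exact ⟨k + 1, by rw [replicate_succ', ofWord_append]⟩
  · rintro _ ⟨k, rfl⟩ w ⟨-, hw⟩
    obtain ⟨i, -, rfl⟩ := sublist_replicate_iff.1 hw
    exact hdisj i
  · exact fun q hq x hx => hx.mul_ofWord hq
  · rintro ⟨w, hwF, x0, xs, hlen, hR⟩
    have hwU : w ∈ U := Useq.mono T _ n.zero_le ⟨w, hwF, .refl w⟩
    have hle : ofWord _ w ≤ psiVal (· * ·) (fun q => ofWord _ [q]) x0 w xs :=
      (le_mul_of_one_le_left' (one_le x0)).trans (mul_ofWord_le_psiVal w x0 xs hlen)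
    exact hR.not_mem_of_ofWord_le hshort hle hwU

/-- relative completeness w.r.t. monotonic abstraction: if
the backward reachability sequence for the monotonic abstraction stabilizes,
`U (n+1) = U n`, with `U n` disjoint from the set `Init = q0^*` of initial
configurations, then there exists a finite first-order structure satisfying all
formulas of `Φ_P` together with `¬Ψ_F`. -/
theorem relative_completeness {Q : Type} [Finite Q]
    (T : Set (Rule Q)) (hT : T.Finite) (q0 : Q)
    (F : Set (List Q)) (hF : F.Finite)
    (B : Set (List Q)) (hB : B = {c | ∃ w ∈ F, w.Sublist c})
    (n : ℕ) (hstab : Useq T B (n + 1) = Useq T B n)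
    (hdisj : ∀ k : ℕ, List.replicate k q0 ∉ Useq T B n) :
    ∃ M : Type, Finite M ∧
      ∃ (mul : M → M → M) (e : M) (cq : Q → M)
        (In R : M → Prop) (PJ : Set Q → M → Prop),
        SatPhi T q0 mul e cq In R PJ ∧ ¬ SatPsiF mul cq R F :=
  relative_completeness_general T q0 F hF B hB n hstab hdisj
end

section
/- Consider the string rewriting system Paterson⁻ over the alphabet {0,1} whose one-step rewriting relation → is generated by the rules: (1) x·0·1·y → x·1·0·y for x ∈ 0* and y ∈ (0+1)*; (2) x·1·0·1·y → x·1·1·0·y for x ∈ (0+1)* and y ∈ 1*; (4) x·0 → 0·x for x ∈ (0+1)*. Then for every n ≥ 0, no string in (0+1)*·0·0 (i.e. no string ending in 00) is reachable from 0^n·1^n under the reflexive-transitive closure →* of the rewriting relation. -/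
/-- One-step rewriting of the string rewriting system Paterson⁻ over the
alphabet `{0, 1}` (here `false` is `0` and `true` is `1`):
rule (1): `x·0·1·y → x·1·0·y` for `x ∈ 0*`, `y ∈ (0+1)*`;
rule (2): `x·1·0·1·y → x·1·1·0·y` for `x ∈ (0+1)*`, `y ∈ 1*`;
rule (4): `x·0 → 0·x` for `x ∈ (0+1)*`. -/
def PatStep (s s' : List Bool) : Prop :=
  (∃ x y : List Bool, (∀ a ∈ x, a = false) ∧
      s = x ++ [false, true] ++ y ∧ s' = x ++ [true, false] ++ y) ∨
  (∃ x y : List Bool, (∀ a ∈ y, a = true) ∧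
      s = x ++ [true, false, true] ++ y ∧ s' = x ++ [true, true, false] ++ y) ∨
  (∃ x : List Bool, s = x ++ [false] ∧ s' = false :: x)

def PatInv (n : ℕ) (s : List Bool) : Prop :=
  s.count true = n ∧ s.count false = n ∧
  ((∀ a ∈ s, a = false) ∨ (∃ u, s = u ++ [true]) ∨ (∃ u, s = u ++ [true, false]))

lemma concat_inj' {a b : Bool} {l m : List Bool} (h : l ++ [a] = m ++ [b]) :
    l = m ∧ a = b := by
  have := List.append_inj h (by
    have := congrArg List.length h
    simpa using this)
  simpa using this

lemma patInv_step {n : ℕ} {s s' : List Bool} (h : PatStep s s') (hs : PatInv n s) : PatInv n s' := by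
  obtain ⟨h1, h2, h3⟩ := hs
  rcases h with ⟨x, y, hx, rfl, rfl⟩ | ⟨x, y, hy, rfl, rfl⟩ | ⟨x, rfl, rfl⟩
  · refine ⟨by simpa [List.count_append] using h1, by simpa [List.count_append] using h2, ?_⟩
    rcases List.eq_nil_or_concat y with rfl | ⟨z, a, rfl⟩
    · right; right; exact ⟨x, by simp⟩
    · cases a
      · -- s ends in 0, so must match tail cases
        rcases h3 with hall | ⟨u, hu⟩ | ⟨u, hu⟩
        · exact absurd (hall true (by simp)) (by simp)
        · exfalso
          have h' : (x ++ [false, true] ++ z) ++ [false] = u ++ [true] := by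
            simpa [List.concat_eq_append] using hu
          have := (concat_inj' h').2; simp at this
        · have h' : (x ++ [false, true] ++ z) ++ [false] = (u ++ [true]) ++ [false] := by
            simpa [List.concat_eq_append] using hu
          have hz : x ++ [false, true] ++ z = u ++ [true] := (concat_inj' h').1
          rcases List.eq_nil_or_concat z with rfl | ⟨w, b, rfl⟩
          · -- s = x ++ [0,1,0], only one 1; counts contradict
            exfalso
            simp only [List.concat_eq_append] at h1 h2
            have hxt : x.count true = 0 := by
              rw [List.count_eq_zero]
              intro h
              exact absurd (hx true h) (by simp)
            have hxf : x.count false = x.length := by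
              rw [List.count_eq_length]
              intro a ha
              simp [hx a ha]
            simp [List.count_append, hxt, hxf] at h1 h2
            omega
          · have hz' : (x ++ [false, true] ++ w) ++ [b] = u ++ [true] := by
              simpa [List.concat_eq_append] using hz
            have hb : b = true := (concat_inj' hz').2
            subst hb
            right; right
            exact ⟨x ++ [true, false] ++ w, by simp⟩
      · right; left; exact ⟨x ++ [true, false] ++ z, by simp⟩
  · refine ⟨by simpa [List.count_append] using h1, by simpa [List.count_append] using h2, ?_⟩
    rcases List.eq_nil_or_concat y with rfl | ⟨z, a, rfl⟩
    · right; right; exact ⟨x ++ [true], by simp⟩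
    · have ha : a = true := hy a (by simp)
      subst ha
      right; left; exact ⟨x ++ [true, true, false] ++ z, by simp⟩
  · refine ⟨by simpa [List.count_append] using h1, ?_, ?_⟩
    · have : (x ++ [false]).count false = n := h2
      simpa [List.count_append, Nat.add_comm] using this
    · rcases h3 with hall | ⟨u, hu⟩ | ⟨u, hu⟩
      · left; intro a ha
        rcases List.mem_cons.mp ha with rfl | ha
        · rfl
        · exact hall a (by simp [ha])
      · exfalso
        have := (concat_inj' hu.symm).2; simp at this
      · have h' : x ++ [false] = (u ++ [true]) ++ [false] := by simpa using hu
        have hx : x = u ++ [true] := (concat_inj' h').1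
        right; left; exact ⟨false :: u, by simp [hx]⟩

lemma patInv_init (n : ℕ) : PatInv n (List.replicate n false ++ List.replicate n true) := by
  refine ⟨by simp [List.count_append, List.count_replicate], by simp [List.count_append, List.count_replicate], ?_⟩
  cases n with
  | zero => left; simp
  | succ m =>
    right; left
    exact ⟨List.replicate (m+1) false ++ List.replicate m true, by
      simp [List.replicate_succ' (n := m)]⟩

/-- safety of Paterson⁻: for every `n ≥ 0`, no string ending
in `00` is reachable from `0^n · 1^n` under the reflexive-transitive closure of
the rewriting relation of Paterson⁻. -/
theorem paterson_minus_safety (n : ℕ) (c : List Bool)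
    (hreach : Relation.ReflTransGen PatStep
      (List.replicate n false ++ List.replicate n true) c) :
    ¬ ∃ u : List Bool, c = u ++ [false, false] := by
  have hinv : PatInv n c := by
    induction hreach with
    | refl => exact patInv_init n
    | tail _ hstep ih => exact patInv_step hstep ih
  rintro ⟨u, rfl⟩
  obtain ⟨h1, h2, h3⟩ := hinv
  rcases h3 with hall | ⟨v, hv⟩ | ⟨v, hv⟩
  · have hn : n = 0 := by
      have : (u ++ [false, false]).count true = 0 := by
        rw [List.count_eq_zero]; intro h
        have := hall true h; simp at this
      omega
    subst hn
    have : (u ++ [false, false]).count false = 0 := h2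
    simp [List.count_append] at this
  · have h' : (u ++ [false]) ++ [false] = v ++ [true] := by simpa using hv
    have := (concat_inj' h').2; simp at this
  · have h' : (u ++ [false]) ++ [false] = (v ++ [true]) ++ [false] := by simpa using hv
    have := (concat_inj' (concat_inj' h').1.symm).2; simp at this
end
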